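/- (Euler formula for mixed-logarithmic homogeneous operators.) Let V be a complex Banach space regarded as real, K : V → V Fréchet differentiable at φ, and suppose K(kφ) = k·K(φ) + k·(p·ln|k| + i·q·arg k)·φ for all complex k near 1, where p,q ∈ ℂ. Then for every η ∈ ℂ: DK(φ)(η·φ) = η·K(φ) + (p·Re η + i·q·Im η)·φ. -/

import Mathlib

/-!
Since `log ‖k‖ = Re (log k)` and `arg k = Im (log k)`, the factor `p·log‖k‖ + i·q·arg k` is
`L (log k)` for the `ℝ`-linear map `L z = p·Re z + i·q·Im z`. Hence both sides of the
homogeneity relation are `ℝ`-differentiable functions of `k` at `1`; as `log 1 = 0`, the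
derivative of `k ↦ k·L(log k)` there is `L` itself, and comparing the two derivatives at `1`
in the direction `η` gives the formula.
-/

open Complex

noncomputable def mixedLogCoeff (p q : ℂ) : ℂ →L[ℝ] ℂ :=
  p • (ofRealCLM.comp reCLM) + (I * q) • (ofRealCLM.comp imCLM)

@[simp]
theorem mixedLogCoeff_apply (p q z : ℂ) :
    mixedLogCoeff p q z = p * z.re + I * q * z.im := by
  simp [mixedLogCoeff]

theorem mixedLogCoeff_log (p q k : ℂ) :
    mixedLogCoeff p q (log k) = p * Real.log ‖k‖ + I * q * k.arg := by
  rw [mixedLogCoeff_apply, log_re, log_im]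

theorem hasFDerivAt_log_one : HasFDerivAt log (ContinuousLinearMap.id ℝ ℂ) 1 := by
  have h := (hasStrictDerivAt_log one_mem_slitPlane).hasDerivAt.hasFDerivAt.restrictScalars ℝ
  exact h.congr_fderiv (by ext; simp)

theorem hasFDerivAt_mul_clm_log_one (L : ℂ →L[ℝ] ℂ) :
    HasFDerivAt (fun k : ℂ => k * L (log k)) L 1 :=
  ((hasFDerivAt_id (1 : ℂ)).mul (L.hasFDerivAt.comp 1 hasFDerivAt_log_one)).congr_fderiv
    (by simp)

/-- Euler's formula for mixed-logarithmic homogeneous operators: if `K : V → V` is Fréchet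
differentiable (over `ℝ`) at `φ` with derivative `D`, and
`K(kφ) = k·K(φ) + k·(p·ln|k| + i·q·arg k)·φ` for all complex `k` near `1`, then
`D(η•φ) = η•K(φ) + (p·Re η + i·q·Im η)•φ` for every `η ∈ ℂ`. -/
theorem euler_mixedLog_homogeneous
    {V : Type*} [NormedAddCommGroup V] [NormedSpace ℂ V]
    (K : V → V) (φ : V) (p q : ℂ) (D : V →L[ℝ] V)
    (hD : HasFDerivAt K D φ)
    (hhom : ∀ᶠ k in nhds (1 : ℂ), K (k • φ) =
      k • K φ + (k * (p * Real.log ‖k‖ + Complex.I * q * k.arg)) • φ) :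
    ∀ η : ℂ, D (η • φ) =
      η • K φ + (p * (η.re : ℂ) + Complex.I * q * (η.im : ℂ)) • φ := by
  intro η
  have hsmul : ∀ v : V, HasFDerivAt (fun k : ℂ => k • v)
      ((ContinuousLinearMap.id ℝ ℂ).smulRight v) 1 :=
    fun v => (hasFDerivAt_id (1 : ℂ)).smul_const v
  have hleft : HasFDerivAt (fun k : ℂ => K (k • φ))
      (D.comp ((ContinuousLinearMap.id ℝ ℂ).smulRight φ)) 1 :=
    HasFDerivAt.comp (1 : ℂ) (by rwa [one_smul]) (hsmul φ)
  have hright : HasFDerivAt (fun k : ℂ => k • K φ + (k * mixedLogCoeff p q (log k)) • φ)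
      ((ContinuousLinearMap.id ℝ ℂ).smulRight (K φ) + (mixedLogCoeff p q).smulRight φ) 1 :=
    (hsmul (K φ)).add ((hasFDerivAt_mul_clm_log_one _).smul_const φ)
  have hK : (fun k : ℂ => K (k • φ)) =ᶠ[nhds 1]
      fun k => k • K φ + (k * mixedLogCoeff p q (log k)) • φ := by
    simpa only [Filter.EventuallyEq, mixedLogCoeff_log] using hhom
  have heq := hleft.unique (hright.congr_of_eventuallyEq hK)
  simpa using congr($heq η)
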